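/- Let i ∈ {0,1} and i ≤ k. An ω-regular language L ⊆ Σ^ω is not DPW[i,k]-recognizable if and only if there exist finite words x ∈ Σ* and x_i, x_{i+1}, …, x_k ∈ Σ⁺ such that for every even ℓ with i ≤ ℓ ≤ k: x·{x_i,…,x_k}*·({x_i,…,x_{ℓ-1}}*·x_ℓ)^ω ⊆ L, and for every odd ℓ with i ≤ ℓ ≤ k: x·{x_i,…,x_k}*·({x_i,…,x_{ℓ-1}}*·x_ℓ)^ω ∩ L = ∅. -/

import Mathlib

/-!
Fix a DPW `M` recognizing `L`. A *loop set* is the set of states visited by a cycle through a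
reachable state; the states a run visits infinitely often form one, so acceptance only depends on
the parity of the maximal colour on loop sets. Call *alternating chain* a chain `I₁ ⊆ ⋯ ⊆ Iᵣ` of
loop sets whose maximal colours alternate in parity, valued from `i` or `i + 1` according to the
parity of `I₁`.

If no chain reaches the value `k + 1`, recolour each state by the largest value of a chain in
whose last loop set it carries the maximal colour: the new colours lie in `{i, …, k}` and have the
same parity as the old ones at the top of every loop set, so the language is unchanged. A chain
reaching `k + 1` gives a flower: through a common state `q` choose loops `x_ℓ` visiting exactly the
`ℓ`-th loop set of the chain; a word of the `ℓ`-th petal then visits exactly that loop set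
infinitely often.

Conversely, given a flower and a DPW with colours in `{i, …, k}`, build blocks
`P₀ = ε`, `P_{j+1} = (P_j x_{i+j} P_j)^e`, with `e` chosen so that the block acts idempotently on
states. After reading `x P_{k-i+1}` every block is a loop at the current state, the states visited
by successive blocks increase, and the petal conditions force the maximal colours on them to
alternate in parity starting from at least `i`; the last one would exceed `k`.
-/

structure DetAuto (α : Type) where
  Q : Type
  [fin : Fintype Q]
  init : Q
  δ : Q → α → Q

attribute [instance] DetAuto.fin

/-- The run of a deterministic automaton on an infinite word. -/
def DetAuto.run {α : Type} (M : DetAuto α) (x : ℕ → α) : ℕ → M.Q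
  | 0 => M.init
  | n + 1 => M.δ (M.run x n) (x n)

/-- Parity acceptance: the maximal color occurring infinitely often in the run is odd. -/
def ParityAccept {α : Type} (M : DetAuto α) (c : M.Q → ℕ) (x : ℕ → α) : Prop :=
  ∃ m, Odd m ∧ (∃ᶠ n in Filter.atTop, c (M.run x n) = m) ∧
    ∀ m', (∃ᶠ n in Filter.atTop, c (M.run x n) = m') → m' ≤ m

/-- A language is ω-regular iff it is recognized by some deterministic parity automaton. -/
def OmegaRegular {α : Type} (L : Set (ℕ → α)) : Prop :=
  ∃ (M : DetAuto α) (c : M.Q → ℕ), ∀ x, x ∈ L ↔ ParityAccept M c x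

/-- `u` is a prefix of the infinite word `w`. -/
def HasPrefixWord {α : Type} (w : ℕ → α) (u : List α) : Prop :=
  ∀ i : Fin u.length, w i.1 = u.get i

/-- The ω-language `x·W*·(W'*·v)^ω`. -/
def LangFlower {α : Type} (x : List α) (W W' : Set (List α)) (v : List α) :
    Set (ℕ → α) :=
  { w | ∃ u : List (List α), (∀ z ∈ u, z ∈ W) ∧
        ∃ g : ℕ → List (List α), (∀ i, ∀ z ∈ g i, z ∈ W') ∧
        ∀ n, HasPrefixWord w
          (x ++ u.flatten ++
            ((List.range n).map (fun i => (g i).flatten ++ v)).flatten) }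

/-- `L` is recognizable by a DPW with colors in `{i, …, k}`. -/
def DPWRecognizable {α : Type} (i k : ℕ) (L : Set (ℕ → α)) : Prop :=
  ∃ (M : DetAuto α) (c : M.Q → ℕ), (∀ q, i ≤ c q ∧ c q ≤ k) ∧
    ∀ x, x ∈ L ↔ ParityAccept M c x

section Words

variable {σ : Type}

lemma hasPrefixWord_iff_take_eq {z : ℕ → σ} {u : List σ} :
    HasPrefixWord z u ↔ Stream'.take u.length z = u := by
  refine ⟨fun h => List.ext_getElem (Stream'.length_take _ _) fun t h₁ h₂ => ?_,
    fun h t => ?_⟩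
  · erw [Stream'.take_get]; exact h ⟨t, h₂⟩
  · obtain ⟨t, ht⟩ := t
    have key : u[t]? = some (z t) := h ▸ Stream'.getElem?_take ht
    simp [List.getElem?_eq_getElem ht] at key
    exact key.symm

lemma HasPrefixWord.take_eq {z : ℕ → σ} {u : List σ} (h : HasPrefixWord z u)
    {n : ℕ} (hn : n ≤ u.length) : Stream'.take n z = u.take n := by
  rw [← hasPrefixWord_iff_take_eq.1 h]
  erw [Stream'.take_take, min_eq_right hn]

lemma Stream'.take_mul_length_cycle (v : List σ) (hv : v ≠ []) (n : ℕ) :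
    Stream'.take (n * v.length) (Stream'.cycle v hv) = (List.replicate n v).flatten := by
  induction n with
  | zero => simp [Stream'.take_zero]
  | succ n ih =>
    rw [Nat.succ_mul, Nat.add_comm, Stream'.cycle_eq, ← Stream'.append_take, ih,
      List.replicate_succ, List.flatten_cons]

lemma hasPrefixWord_append_cycle (y v : List σ) (hv : v ≠ []) (n : ℕ) :
    HasPrefixWord (y ++ₛ Stream'.cycle v hv).get (y ++ (List.replicate n v).flatten) := by
  have hlen : (y ++ (List.replicate n v).flatten).length = y.length + n * v.length := by simp
  rw [hasPrefixWord_iff_take_eq, hlen, ← Stream'.take_mul_length_cycle v hv]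
  exact (Stream'.append_take _ _ _).symm

lemma HasPrefixWord.of_prefix {z : ℕ → σ} {u u' : List σ} (h : HasPrefixWord z u)
    (hu : u' <+: u) : HasPrefixWord z u' := by
  rw [hasPrefixWord_iff_take_eq, h.take_eq hu.length_le, ← List.prefix_iff_eq_take.1 hu]

lemma List.append_flatten_replicate_append {α : Type*} (a b : List α) (n : ℕ) :
    a ++ (List.replicate n (b ++ a)).flatten = (List.replicate n (a ++ b)).flatten ++ a := by
  induction n with
  | zero => simp
  | succ n ih =>
    simp only [List.replicate_succ, List.flatten_cons, List.append_assoc, ih]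

lemma List.flatten_replicate_flatten_replicate {α : Type*} (a : List α) (m n : ℕ) :
    (List.replicate n (List.replicate m a).flatten).flatten =
      (List.replicate (n * m) a).flatten := by
  rw [← List.flatten_replicate_replicate, List.flatten_flatten, List.map_replicate]

end Words

theorem exists_pos_isIdempotentElem_pow {G : Type*} [Monoid G] [Finite G] (x : G) :
    ∃ n, 0 < n ∧ IsIdempotentElem (x ^ n) := by
  obtain ⟨a, b, hab, hx⟩ : ∃ a b, a < b ∧ x ^ a = x ^ b := by
    obtain ⟨a, b, hne, h⟩ := Finite.exists_ne_map_eq_of_infinite (x ^ · : ℕ → G)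
    rcases hne.lt_or_gt with hlt | hlt
    exacts [⟨a, b, hlt, h⟩, ⟨b, a, hlt, h.symm⟩]
  have hper : ∀ r t, a ≤ t → x ^ (t + r * (b - a)) = x ^ t := by
    intro r t ht
    induction r with
    | zero => simp
    | succ r ih =>
      calc x ^ (t + (r + 1) * (b - a)) = x ^ (t + r * (b - a) - a) * x ^ b := by
            rw [← pow_add]; congr 1; rw [Nat.add_mul]; omega
        _ = x ^ t := by
            rw [← hx, ← pow_add, Nat.sub_add_cancel (Nat.le_add_right_of_le ht), ih]
  -- a multiple of the period `b - a` beyond the preperiod `a`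
  refine ⟨(a + 1) * (b - a), Nat.mul_pos (by omega) (by omega), ?_⟩
  rw [IsIdempotentElem, ← pow_add,
    hper _ _ ((Nat.le_succ a).trans (Nat.le_mul_of_pos_right _ (by omega)))]

lemma add_succ_le_of_mod_two_alternating {a : ℕ → ℕ} {i n : ℕ} (h0 : i ≤ a 0)
    (hmono : ∀ j < n, a j ≤ a (j + 1)) (hpar : ∀ j ≤ n, a j % 2 = (i + j + 1) % 2) :
    i + n + 1 ≤ a n := by
  induction n with
  | zero => have := hpar 0 le_rfl; omega
  | succ n ih =>
    have := ih (fun j hj => hmono j (by omega)) (fun j hj => hpar j (by omega))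
    have := hmono n (by omega)
    have := hpar (n + 1) le_rfl
    omega

section Flower

variable {σ : Type}

/-- The petal `x·{f i,…,f k}*·({f i,…,f (ℓ-1)}*·f ℓ)^ω`, with `f ℓ` in the role of `x_ℓ`. -/
def flowerLang (i k : ℕ) (x : List σ) (f : ℕ → List σ) (ℓ : ℕ) : Set (ℕ → σ) :=
  LangFlower x {u | ∃ m, i ≤ m ∧ m ≤ k ∧ u = f m} {u | ∃ m, i ≤ m ∧ m < ℓ ∧ u = f m} (f ℓ)

def IsFlower (i k : ℕ) (L : Set (ℕ → σ)) (x : List σ) (f : ℕ → List σ) : Prop :=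
  (∀ ℓ, i ≤ ℓ → ℓ ≤ k → f ℓ ≠ []) ∧
    (∀ ℓ, i ≤ ℓ → ℓ ≤ k → Even ℓ → flowerLang i k x f ℓ ⊆ L) ∧
    (∀ ℓ, i ≤ ℓ → ℓ ≤ k → Odd ℓ → flowerLang i k x f ℓ ∩ L = ∅)

end Flower

namespace DetAuto

open scoped Classical
open Filter

variable {σ : Type} {M : DetAuto σ}

/-! ### Reading finite words -/

variable (M) in
def evalFrom (q : M.Q) (w : List σ) : M.Q := w.foldl M.δ q

@[simp] lemma evalFrom_nil (q : M.Q) : M.evalFrom q [] = q := rfl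

@[simp] lemma evalFrom_append (q : M.Q) (w₁ w₂ : List σ) :
    M.evalFrom q (w₁ ++ w₂) = M.evalFrom (M.evalFrom q w₁) w₂ :=
  List.foldl_append ..

lemma evalFrom_flatten_of_forall_eq {q : M.Q} {ws : List (List σ)}
    (h : ∀ w ∈ ws, M.evalFrom q w = q) : M.evalFrom q ws.flatten = q := by
  induction ws with
  | nil => rfl
  | cons w ws ih =>
    rw [List.flatten_cons, evalFrom_append, h w List.mem_cons_self]
    exact ih fun w' hw' => h w' (List.mem_cons_of_mem _ hw')

lemma evalFrom_flatten_replicate (q : M.Q) (w : List σ) (n : ℕ) :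
    M.evalFrom q (List.replicate n w).flatten = (M.evalFrom · w)^[n] q := by
  induction n generalizing q with
  | zero => rfl
  | succ n ih =>
    rw [List.replicate_succ, List.flatten_cons, evalFrom_append, ih,
      Function.iterate_succ_apply]

variable (M) in
lemma run_eq_evalFrom_take (z : ℕ → σ) (n : ℕ) :
    M.run z n = M.evalFrom M.init (Stream'.take n z) := by
  induction n with
  | zero => rfl
  | succ n ih => erw [Stream'.take_succ', evalFrom_append, ← ih]; rfl

variable (M) in
lemma run_add (z : ℕ → σ) (n m : ℕ) :
    M.run z (n + m) = M.evalFrom (M.run z n) (Stream'.take m (Stream'.drop n z)) := by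
  rw [run_eq_evalFrom_take, run_eq_evalFrom_take]
  erw [Stream'.take_add, evalFrom_append]

variable (M) in
lemma run_eq_evalFrom_of_hasPrefixWord {z : ℕ → σ} {u : List σ} (h : HasPrefixWord z u)
    {n : ℕ} (hn : n ≤ u.length) : M.run z n = M.evalFrom M.init (u.take n) := by
  rw [run_eq_evalFrom_take, h.take_eq hn]

variable (M) in
noncomputable def visitedStates (q : M.Q) (w : List σ) : Finset M.Q :=
  (Finset.range w.length).image fun j => M.evalFrom q (w.take j)

lemma mem_visitedStates {q s : M.Q} {w : List σ} :
    s ∈ M.visitedStates q w ↔ ∃ j < w.length, M.evalFrom q (w.take j) = s := by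
  simp [visitedStates]

lemma self_mem_visitedStates {q : M.Q} {w : List σ} (hw : w ≠ []) :
    q ∈ M.visitedStates q w :=
  mem_visitedStates.2 ⟨0, List.length_pos_iff.2 hw, rfl⟩

lemma visitedStates_append (q : M.Q) (w₁ w₂ : List σ) :
    M.visitedStates q (w₁ ++ w₂) =
      M.visitedStates q w₁ ∪ M.visitedStates (M.evalFrom q w₁) w₂ := by
  ext s
  simp only [mem_visitedStates, Finset.mem_union, List.length_append]
  constructor
  · rintro ⟨j, hj, rfl⟩
    rcases lt_or_ge j w₁.length with hj₁ | hj₁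
    · exact Or.inl ⟨j, hj₁, by rw [List.take_append_of_le_length hj₁.le]⟩
    · refine Or.inr ⟨j - w₁.length, by omega, ?_⟩
      rw [List.take_append, List.take_of_length_le hj₁, evalFrom_append]
  · rintro (⟨j, hj, rfl⟩ | ⟨j, hj, rfl⟩)
    · exact ⟨j, by omega, by rw [List.take_append_of_le_length hj.le]⟩
    · refine ⟨w₁.length + j, by omega, ?_⟩
      rw [List.take_append, List.take_of_length_le (by omega), evalFrom_append,
        Nat.add_sub_cancel_left]

lemma visitedStates_subset_append (q : M.Q) (w₁ w₂ : List σ) :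
    M.visitedStates q w₁ ⊆ M.visitedStates q (w₁ ++ w₂) := by
  rw [visitedStates_append]; exact Finset.subset_union_left

lemma visitedStates_flatten_subset {q : M.Q} {S : Finset M.Q} {ws : List (List σ)}
    (h : ∀ w ∈ ws, M.evalFrom q w = q ∧ M.visitedStates q w ⊆ S) :
    M.visitedStates q ws.flatten ⊆ S := by
  induction ws with
  | nil => simp [visitedStates]
  | cons w ws ih =>
    obtain ⟨hloop, hsub⟩ := h w List.mem_cons_self
    rw [List.flatten_cons, visitedStates_append, hloop]
    exact Finset.union_subset hsub (ih fun w' hw' => h w' (List.mem_cons_of_mem _ hw'))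

lemma visitedStates_run (z : ℕ → σ) (n m : ℕ) :
    M.visitedStates (M.run z n) (Stream'.take m (Stream'.drop n z)) =
      (Finset.Ico n (n + m)).image (M.run z) := by
  ext s
  simp only [mem_visitedStates, Finset.mem_image, Finset.mem_Ico, Stream'.length_take]
  constructor
  · rintro ⟨j, hj, rfl⟩
    refine ⟨n + j, by omega, ?_⟩
    erw [run_add, Stream'.take_take, min_eq_right hj.le]
  · rintro ⟨t, ht, rfl⟩
    refine ⟨t - n, by omega, ?_⟩
    erw [Stream'.take_take, min_eq_right (by omega), ← run_add, Nat.add_sub_cancel' ht.1]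

/-! ### Loop sets and the states visited infinitely often -/

variable (M) in
def IsLoopSet (I : Finset M.Q) : Prop :=
  ∃ q y w, M.evalFrom M.init y = q ∧ w ≠ [] ∧ M.evalFrom q w = q ∧ M.visitedStates q w = I

lemma IsLoopSet.nonempty {I : Finset M.Q} (h : M.IsLoopSet I) : I.Nonempty := by
  obtain ⟨q, -, w, -, hw, -, rfl⟩ := h
  exact ⟨q, self_mem_visitedStates hw⟩

/-- A loop through `q` visiting `s` can be rotated into a loop through `s`: read the rest of
the loop up to `q`, then the whole loop, then its beginning up to `s`. -/
lemma IsLoopSet.exists_loop_at {I : Finset M.Q} (h : M.IsLoopSet I) {s : M.Q} (hs : s ∈ I) :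
    ∃ y w, M.evalFrom M.init y = s ∧ w ≠ [] ∧ M.evalFrom s w = s ∧ M.visitedStates s w = I := by
  obtain ⟨q, y, w, hy, hw, hloop, rfl⟩ := h
  obtain ⟨j, -, rfl⟩ := mem_visitedStates.1 hs
  have hsplit := visitedStates_append q (w.take j) (w.drop j)
  have hdrop : M.evalFrom (M.evalFrom q (w.take j)) (w.drop j) = q := by
    rw [← evalFrom_append, List.take_append_drop, hloop]
  rw [List.take_append_drop] at hsplit
  refine ⟨y ++ w.take j, w.drop j ++ w ++ w.take j, by simp [hy], by simp [hw], ?_, ?_⟩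
  · simp [hdrop, hloop]
  · rw [visitedStates_append, visitedStates_append, evalFrom_append, hdrop, hloop, hsplit]
    ext; simp only [Finset.mem_union]; tauto

lemma IsLoopSet.union {I J : Finset M.Q} (hI : M.IsLoopSet I) (hJ : M.IsLoopSet J) {s : M.Q}
    (hsI : s ∈ I) (hsJ : s ∈ J) : M.IsLoopSet (I ∪ J) := by
  obtain ⟨y, w₁, hy, hw₁, hloop₁, rfl⟩ := hI.exists_loop_at hsI
  obtain ⟨-, w₂, -, -, hloop₂, rfl⟩ := hJ.exists_loop_at hsJ
  exact ⟨s, y, w₁ ++ w₂, hy, by simp [hw₁], by simp [hloop₁, hloop₂],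
    by rw [visitedStates_append, hloop₁]⟩

variable (M) in
noncomputable def infOcc (z : ℕ → σ) : Finset M.Q :=
  Finset.univ.filter fun s => ∃ᶠ n in atTop, M.run z n = s

lemma mem_infOcc {z : ℕ → σ} {s : M.Q} : s ∈ M.infOcc z ↔ ∃ᶠ n in atTop, M.run z n = s := by
  simp [infOcc]

lemma eventually_run_mem_infOcc (z : ℕ → σ) : ∀ᶠ n in atTop, M.run z n ∈ M.infOcc z := by
  have h : ∀ᶠ n in atTop, ∀ s : M.Q, s ∉ M.infOcc z → M.run z n ≠ s := by
    refine eventually_all.2 fun s => ?_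
    by_cases hs : s ∈ M.infOcc z
    · exact Eventually.of_forall fun _ h => absurd hs h
    · exact (not_frequently.1 (mt mem_infOcc.2 hs)).mono fun _ hn _ => hn
  exact h.mono fun n hn => by_contra fun hc => hn _ hc rfl

lemma infOcc_nonempty (z : ℕ → σ) : (M.infOcc z).Nonempty :=
  let ⟨_, hn⟩ := (eventually_run_mem_infOcc z).exists
  ⟨_, hn⟩

lemma frequently_color_eq_iff (c : M.Q → ℕ) (z : ℕ → σ) (m : ℕ) :
    (∃ᶠ n in atTop, c (M.run z n) = m) ↔ ∃ s ∈ M.infOcc z, c s = m := by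
  constructor
  · intro h
    obtain ⟨n, hm, hn⟩ := (h.and_eventually (eventually_run_mem_infOcc z)).exists
    exact ⟨_, hn, hm⟩
  · rintro ⟨s, hs, rfl⟩
    exact (mem_infOcc.1 hs).mono fun n hn => by rw [hn]

theorem parityAccept_iff_odd_sup_infOcc (c : M.Q → ℕ) (z : ℕ → σ) :
    ParityAccept M c z ↔ Odd ((M.infOcc z).sup c) := by
  simp only [ParityAccept, frequently_color_eq_iff]
  obtain ⟨s, hs, hmax⟩ := Finset.exists_mem_eq_sup _ (infOcc_nonempty z) c
  constructor
  · rintro ⟨m, hodd, ⟨t, ht, rfl⟩, hle⟩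
    rwa [← le_antisymm (Finset.le_sup ht) (hmax.trans_le (hle _ ⟨s, hs, rfl⟩))]
  · exact fun hodd => ⟨_, hodd, ⟨s, hs, hmax.symm⟩, fun _ ⟨t, ht, h⟩ => h ▸ Finset.le_sup ht⟩

lemma infOcc_eq {z : ℕ → σ} {S : Finset M.Q} (h₁ : ∀ᶠ n in atTop, M.run z n ∈ S)
    (h₂ : ∀ s ∈ S, ∃ᶠ n in atTop, M.run z n = s) : M.infOcc z = S := by
  ext s
  refine ⟨fun hs => ?_, fun hs => mem_infOcc.2 (h₂ s hs)⟩
  obtain ⟨n, rfl, hn⟩ := ((mem_infOcc.1 hs).and_eventually h₁).exists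
  exact hn

/-- From a time `N` on, the run stays in `infOcc z`; the loop is the segment of the run from `N`
to a later return to the state at time `N`, chosen late enough to visit all of `infOcc z`. -/
theorem isLoopSet_infOcc (z : ℕ → σ) : M.IsLoopSet (M.infOcc z) := by
  obtain ⟨N, hN⟩ := eventually_atTop.1 (eventually_run_mem_infOcc (M := M) z)
  have hvisit : ∀ s, ∃ t, s ∈ M.infOcc z → N ≤ t ∧ M.run z t = s := fun s => by
    by_cases hs : s ∈ M.infOcc z
    · obtain ⟨t, ht, hts⟩ := frequently_atTop.1 (mem_infOcc.1 hs) N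
      exact ⟨t, fun _ => ⟨ht, hts⟩⟩
    · exact ⟨0, fun h => absurd h hs⟩
  choose o ho using hvisit
  obtain ⟨n, hn, hret⟩ :=
    frequently_atTop.1 (mem_infOcc.1 (hN N le_rfl)) (Finset.univ.sup o + 1)
  have ho_le : ∀ s, o s ≤ Finset.univ.sup o := fun s => Finset.le_sup (Finset.mem_univ s)
  have hNn : N < n := by have := (ho _ (hN N le_rfl)).1; have := ho_le (M.run z N); omega
  refine ⟨M.run z N, Stream'.take N z, Stream'.take (n - N) (Stream'.drop N z),
    (run_eq_evalFrom_take M z N).symm, ?_, ?_, ?_⟩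
  · rw [← List.length_pos_iff, Stream'.length_take]; omega
  · rw [← run_add, Nat.add_sub_cancel' hNn.le, hret]
  · rw [visitedStates_run, Nat.add_sub_cancel' hNn.le]
    ext s
    simp only [Finset.mem_image, Finset.mem_Ico]
    constructor
    · rintro ⟨t, ht, rfl⟩
      exact hN t ht.1
    · intro hs
      have := ho_le s
      exact ⟨o s, ⟨(ho s hs).1, by omega⟩, (ho s hs).2⟩

theorem infOcc_eq_of_loops {z : ℕ → σ} {y : List σ} {B : ℕ → List σ} {q : M.Q}
    {S : Finset M.Q} (hz : ∀ n, HasPrefixWord z (y ++ ((List.range n).map B).flatten))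
    (hy : M.evalFrom M.init y = q) (hB : ∀ n, B n ≠ [])
    (hloop : ∀ n, M.evalFrom q (B n) = q) (hS : ∀ n, M.visitedStates q (B n) = S) :
    M.infOcc z = S := by
  set pre : ℕ → List σ := fun n => y ++ ((List.range n).map B).flatten
  have pre_succ : ∀ n, pre (n + 1) = pre n ++ B n := by simp [pre, List.range_succ]
  have hpre : ∀ n, M.evalFrom M.init (pre n) = q := by
    intro n
    induction n with
    | zero => simpa [pre] using hy
    | succ n ih => rw [pre_succ, evalFrom_append, ih, hloop]
  have hlen : ∀ n, y.length + n ≤ (pre n).length := by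
    intro n
    induction n with
    | zero => simp [pre]
    | succ n ih =>
      have := List.length_pos_iff.2 (hB n)
      rw [pre_succ, List.length_append]; omega
  have hrun : ∀ n, ∀ j ≤ (B n).length,
      M.run z ((pre n).length + j) = M.evalFrom q ((B n).take j) := by
    intro n j hj
    have hzn : HasPrefixWord z (pre n ++ B n) := pre_succ n ▸ hz (n + 1)
    rw [M.run_eq_evalFrom_of_hasPrefixWord hzn (by simp; omega), List.take_append,
      List.take_of_length_le (by omega), Nat.add_sub_cancel_left, evalFrom_append, hpre]
  have hrun_all : ∀ n t, y.length ≤ t → t < (pre n).length → M.run z t ∈ S := by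
    intro n
    induction n with
    | zero => intro t h₁ h₂; simp [pre] at h₂; omega
    | succ n ih =>
      intro t h₁ h₂
      rw [pre_succ, List.length_append] at h₂
      rcases lt_or_ge t (pre n).length with ht | ht
      · exact ih t h₁ ht
      · obtain ⟨j, rfl⟩ := Nat.exists_eq_add_of_le ht
        rw [hrun n j (by omega), ← hS n]
        exact mem_visitedStates.2 ⟨j, by omega, rfl⟩
  refine infOcc_eq (eventually_atTop.2 ⟨y.length, fun t ht => ?_⟩) fun s hs => ?_
  · exact hrun_all (t + 1) t ht (by have := hlen (t + 1); omega)
  · refine frequently_atTop.2 fun N => ?_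
    obtain ⟨j, hj, rfl⟩ := mem_visitedStates.1 ((hS N).symm ▸ hs)
    have := hlen N
    exact ⟨(pre N).length + j, by omega, hrun N j hj.le⟩

theorem infOcc_eq_of_mem_langFlower {x v : List σ} {W W' : Set (List σ)} {q : M.Q}
    {S : Finset M.Q} (hx : M.evalFrom M.init x = q) (hW : ∀ w ∈ W, M.evalFrom q w = q)
    (hW' : ∀ w ∈ W', M.evalFrom q w = q ∧ M.visitedStates q w ⊆ S) (hv : v ≠ [])
    (hvq : M.evalFrom q v = q) (hvS : M.visitedStates q v = S) {z : ℕ → σ}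
    (hz : z ∈ LangFlower x W W' v) : M.infOcc z = S := by
  obtain ⟨u, hu, g, hg, hpre⟩ := hz
  have hgq : ∀ n, M.evalFrom q (g n).flatten = q := fun n =>
    evalFrom_flatten_of_forall_eq fun w hw => (hW' w (hg n w hw)).1
  refine infOcc_eq_of_loops (y := x ++ u.flatten) (q := q) hpre ?_ (fun n => by simp [hv])
    (fun n => ?_) (fun n => ?_)
  · rw [evalFrom_append, hx, evalFrom_flatten_of_forall_eq fun w hw => hW w (hu w hw)]
  · rw [evalFrom_append, hgq, hvq]
  · rw [visitedStates_append, hgq, hvS]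
    exact Finset.union_eq_right.2 (visitedStates_flatten_subset fun w hw => hW' w (hg n w hw))

/-! ### Alternating chains -/

/-- `AltChain c i I v`: there is a chain `I₁ ⊆ ⋯ ⊆ Iᵣ = I` of loop sets whose maximal colours
alternate in parity, and `v = v₁ + r - 1` where `v₁ ∈ {i, i + 1}` has the parity of the maximal
colour of `I₁`. -/
inductive AltChain (c : M.Q → ℕ) (i : ℕ) : Finset M.Q → ℕ → Prop
  | base {I} : M.IsLoopSet I → AltChain c i I (i + (I.sup c + i) % 2)
  | step {J I v} : AltChain c i J v → M.IsLoopSet I → J ⊆ I → I.sup c % 2 ≠ v % 2 →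
      AltChain c i I (v + 1)

namespace AltChain

variable {c : M.Q → ℕ} {i : ℕ} {I : Finset M.Q} {v : ℕ}

lemma isLoopSet (h : AltChain c i I v) : M.IsLoopSet I := by
  cases h with
  | base hI => exact hI
  | step _ hI _ _ => exact hI

lemma le (h : AltChain c i I v) : i ≤ v := by
  induction h with
  | base => omega
  | step _ _ _ _ ih => omega

lemma mod_two (h : AltChain c i I v) : v % 2 = I.sup c % 2 := by
  induction h with
  | base => omega
  | step _ _ _ _ ih => omega

lemma le_of_not_exists {k : ℕ} (hik : i ≤ k) (hk : ¬∃ I, AltChain c i I (k + 1))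
    (h : AltChain c i I v) : v ≤ k := by
  induction h with
  | @base I hI =>
    by_contra hlt
    exact hk ⟨I, by convert AltChain.base (c := c) (i := i) hI using 1; omega⟩
  | @step J I v hJ hI hJI hpar ih =>
    by_contra hlt
    exact hk ⟨I, by convert hJ.step hI hJI hpar using 1; omega⟩

lemma exists_nested (h : AltChain c i I v) :
    ∃ J : ℕ → Finset M.Q, J v = I ∧
      (∀ t, i < t → t ≤ v → M.IsLoopSet (J t) ∧ (J t).sup c % 2 = t % 2) ∧
      (∀ t t', i < t → t ≤ t' → t' ≤ v → J t ⊆ J t') := by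
  induction h with
  | @base I hI =>
    exact ⟨fun _ => I, rfl, fun t ht₁ ht₂ => ⟨hI, by dsimp only; omega⟩,
      fun _ _ _ _ _ => subset_rfl⟩
  | @step J I v hJ hI hJI hpar ih =>
    obtain ⟨K, hKv, hK, hKmono⟩ := ih
    refine ⟨fun t => if t ≤ v then K t else I, by simp, fun t ht₁ ht₂ => ?_,
      fun t t' ht htt' ht' => ?_⟩
    · dsimp only
      split_ifs with htv
      · exact hK t ht₁ htv
      · have := hJ.mod_two; exact ⟨hI, by omega⟩
    · dsimp only
      split_ifs with htv ht'v ht'v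
      · exact hKmono t t' ht htt' ht'v
      · exact (hKmono t v ht htv le_rfl).trans (hKv ▸ hJI)
      · omega
      · exact subset_rfl

end AltChain

section Recolouring

variable (c : M.Q → ℕ) (i k : ℕ)

noncomputable def chainColor (q : M.Q) : ℕ :=
  max i (Nat.findGreatest (fun v => ∃ I, AltChain c i I v ∧ q ∈ I ∧ c q = I.sup c) k)

variable {c i k}

lemma le_chainColor_of_altChain {q : M.Q} {I : Finset M.Q} {v : ℕ} (h : AltChain c i I v)
    (hq : q ∈ I) (hcq : c q = I.sup c) (hv : v ≤ k) : v ≤ chainColor c i k q :=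
  le_max_of_le_right (Nat.le_findGreatest hv ⟨I, h, hq, hcq⟩)

lemma chainColor_eq_or_altChain (q : M.Q) : chainColor c i k q = i ∨
    ∃ I, AltChain c i I (chainColor c i k q) ∧ q ∈ I ∧ c q = I.sup c := by
  unfold chainColor
  set g := Nat.findGreatest (fun v => ∃ I, AltChain c i I v ∧ q ∈ I ∧ c q = I.sup c) k with hg
  rcases le_total g i with h | h
  · exact Or.inl (max_eq_left h)
  · rw [max_eq_right h]
    rcases eq_or_ne g 0 with h0 | h0
    · left; omega
    · exact Or.inr (Nat.findGreatest_of_ne_zero hg.symm h0)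

/-- On every loop set the recolouring has a maximal colour of the same parity: otherwise the
loop set carrying the maximal new colour, joined with the given one, extends its chain. -/
theorem sup_chainColor_mod_two (hik : i ≤ k) (hk : ¬∃ I, AltChain c i I (k + 1))
    {I : Finset M.Q} (hI : M.IsLoopSet I) :
    I.sup (chainColor c i k) % 2 = I.sup c % 2 := by
  obtain ⟨qm, hqm, hcqm⟩ := Finset.exists_mem_eq_sup I hI.nonempty c
  obtain ⟨qh, hqh, hcqh⟩ := Finset.exists_mem_eq_sup I hI.nonempty (chainColor c i k)
  have hbase := AltChain.base (c := c) (i := i) hI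
  have hlow : i + (I.sup c + i) % 2 ≤ chainColor c i k qm :=
    le_chainColor_of_altChain hbase hqm hcqm.symm (hbase.le_of_not_exists hik hk)
  have hqmh : chainColor c i k qm ≤ chainColor c i k qh := hcqh ▸ Finset.le_sup hqm
  rw [hcqh]
  rcases chainColor_eq_or_altChain (c := c) (i := i) (k := k) qh with h | ⟨J, hJ, hqhJ, hcJ⟩
  · omega
  · by_contra hpar
    have hsup : (I ∪ J).sup c = I.sup c := by
      rw [Finset.sup_union, sup_eq_left, ← hcJ]
      exact Finset.le_sup hqh
    have hstep : AltChain c i (I ∪ J) (chainColor c i k qh + 1) :=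
      hJ.step (hI.union hJ.isLoopSet hqh hqhJ) Finset.subset_union_right (by rw [hsup]; omega)
    have := le_chainColor_of_altChain hstep (Finset.mem_union_left _ hqm) (by rw [hsup, hcqm])
      (hstep.le_of_not_exists hik hk)
    omega

lemma chainColor_mem_Icc (hik : i ≤ k) (q : M.Q) : chainColor c i k q ∈ Set.Icc i k :=
  ⟨le_max_left _ _, max_le hik (Nat.findGreatest_le k)⟩

theorem dpwRecognizable_of_not_exists_altChain {L : Set (ℕ → σ)}
    (hL : ∀ z, z ∈ L ↔ ParityAccept M c z) (hik : i ≤ k)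
    (hk : ¬∃ I, AltChain c i I (k + 1)) : DPWRecognizable i k L := by
  refine ⟨M, chainColor c i k, chainColor_mem_Icc hik, fun z => ?_⟩
  rw [hL, parityAccept_iff_odd_sup_infOcc, parityAccept_iff_odd_sup_infOcc, Nat.odd_iff,
    Nat.odd_iff, sup_chainColor_mod_two hik hk (isLoopSet_infOcc z)]

end Recolouring

theorem exists_isFlower_of_altChain {c : M.Q → ℕ} {i k : ℕ} {L : Set (ℕ → σ)}
    (hL : ∀ z, z ∈ L ↔ ParityAccept M c z) (hik : i ≤ k) {I : Finset M.Q}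
    (h : AltChain c i I (k + 1)) :
    ∃ x f, IsFlower i k L x f := by
  obtain ⟨J, -, hJ, hJmono⟩ := h.exists_nested
  obtain ⟨q, hq⟩ := (hJ (i + 1) (by omega) (by omega)).1.nonempty
  have hqJ : ∀ ℓ, i ≤ ℓ → ℓ ≤ k → q ∈ J (ℓ + 1) := fun ℓ h₁ h₂ =>
    hJmono (i + 1) (ℓ + 1) (by omega) (by omega) (by omega) hq
  have hloop : ∀ ℓ, ∃ w, i ≤ ℓ → ℓ ≤ k →
      w ≠ [] ∧ M.evalFrom q w = q ∧ M.visitedStates q w = J (ℓ + 1) := by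
    intro ℓ
    by_cases hℓ : i ≤ ℓ ∧ ℓ ≤ k
    · obtain ⟨-, w, -, hw⟩ :=
        (hJ (ℓ + 1) (by omega) (by omega)).1.exists_loop_at (hqJ ℓ hℓ.1 hℓ.2)
      exact ⟨w, fun _ _ => hw⟩
    · exact ⟨[], fun h₁ h₂ => absurd ⟨h₁, h₂⟩ hℓ⟩
  choose f hf using hloop
  obtain ⟨x, -, hx, -⟩ := (hJ (i + 1) (by omega) (by omega)).1.exists_loop_at hq
  have hmem : ∀ ℓ, i ≤ ℓ → ℓ ≤ k → ∀ z ∈ flowerLang i k x f ℓ, z ∈ L ↔ Even ℓ := by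
    intro ℓ h₁ h₂ z hz
    obtain ⟨hne, hfq, hfS⟩ := hf ℓ h₁ h₂
    have hW : ∀ w ∈ {u | ∃ m, i ≤ m ∧ m ≤ k ∧ u = f m}, M.evalFrom q w = q := by
      rintro _ ⟨m, hm₁, hm₂, rfl⟩
      exact (hf m hm₁ hm₂).2.1
    have hW' : ∀ w ∈ {u | ∃ m, i ≤ m ∧ m < ℓ ∧ u = f m},
        M.evalFrom q w = q ∧ M.visitedStates q w ⊆ J (ℓ + 1) := by
      rintro _ ⟨m, hm₁, hm₂, rfl⟩
      obtain ⟨-, hfq', hfS'⟩ := hf m hm₁ (by omega)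
      exact ⟨hfq', hfS' ▸ hJmono (m + 1) (ℓ + 1) (by omega) (by omega) (by omega)⟩
    rw [hL, parityAccept_iff_odd_sup_infOcc,
      infOcc_eq_of_mem_langFlower hx hW hW' hne hfq hfS hz, Nat.odd_iff,
      (hJ (ℓ + 1) (by omega) (by omega)).2, Nat.even_iff]
    omega
  refine ⟨x, f, fun ℓ h₁ h₂ => (hf ℓ h₁ h₂).1,
    fun ℓ h₁ h₂ hev z hz => (hmem ℓ h₁ h₂ z hz).2 hev,
    fun ℓ h₁ h₂ hodd => Set.eq_empty_iff_forall_notMem.2 fun z ⟨hz, hzL⟩ => ?_⟩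
  exact Nat.not_even_iff_odd.2 hodd ((hmem ℓ h₁ h₂ z hz).1 hzL)

/-! ### Idempotent blocks -/

section Blocks

variable (M)

theorem exists_pos_evalFrom_idempotent (w : List σ) :
    ∃ n, 0 < n ∧ ∀ q, M.evalFrom (M.evalFrom q (List.replicate n w).flatten)
      (List.replicate n w).flatten = M.evalFrom q (List.replicate n w).flatten := by
  have : Finite (Function.End M.Q) := inferInstanceAs (Finite (M.Q → M.Q))
  obtain ⟨n, hn, hidem⟩ :=
    exists_pos_isIdempotentElem_pow (show Function.End M.Q from (M.evalFrom · w))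
  refine ⟨n, hn, fun q => ?_⟩
  simp only [evalFrom_flatten_replicate]
  exact congrFun hidem q

noncomputable def idemExp (w : List σ) : ℕ := (M.exists_pos_evalFrom_idempotent w).choose

lemma idemExp_pos (w : List σ) : 0 < M.idemExp w :=
  (M.exists_pos_evalFrom_idempotent w).choose_spec.1

lemma evalFrom_replicate_idemExp_idem (w : List σ) (q : M.Q) :
    M.evalFrom (M.evalFrom q (List.replicate (M.idemExp w) w).flatten)
      (List.replicate (M.idemExp w) w).flatten =
    M.evalFrom q (List.replicate (M.idemExp w) w).flatten :=
  (M.exists_pos_evalFrom_idempotent w).choose_spec.2 q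

/-- `flowerBlock M f i (j + 1) = (P · f (i + j) · P) ^ e` with `P = flowerBlock M f i j` and `e`
an exponent making the power act idempotently on states; it is kept as the list of the factors
`f m`, which records its membership in `{f i, …, f (i + j)}*`. -/
noncomputable def flowerBlock (f : ℕ → List σ) (i : ℕ) : ℕ → List (List σ)
  | 0 => []
  | j + 1 =>
    let u := flowerBlock f i j ++ [f (i + j)] ++ flowerBlock f i j
    (List.replicate (M.idemExp u.flatten) u).flatten

variable (f : ℕ → List σ) (i : ℕ)

noncomputable def flowerPetal (j : ℕ) : List σ :=
  (M.flowerBlock f i j).flatten ++ f (i + j) ++ (M.flowerBlock f i j).flatten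

lemma flatten_flowerBlock_succ (j : ℕ) :
    (M.flowerBlock f i (j + 1)).flatten =
      (List.replicate (M.idemExp (M.flowerPetal f i j)) (M.flowerPetal f i j)).flatten := by
  have : (M.flowerBlock f i j ++ [f (i + j)] ++ M.flowerBlock f i j).flatten =
      M.flowerPetal f i j := by simp [flowerPetal]
  rw [flowerBlock, List.flatten_flatten, List.map_replicate, this]

lemma mem_flowerBlock {j : ℕ} {w : List σ} (hw : w ∈ M.flowerBlock f i j) :
    ∃ m, i ≤ m ∧ m < i + j ∧ w = f m := by
  induction j with
  | zero => simp [flowerBlock] at hw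
  | succ j ih =>
    obtain ⟨l, hl, hw⟩ := List.mem_flatten.1 hw
    rw [(List.mem_replicate.1 hl).2] at hw
    simp only [List.mem_append, List.mem_singleton] at hw
    obtain (hw | rfl) | hw := hw
    · obtain ⟨m, hm₁, hm₂, rfl⟩ := ih hw; exact ⟨m, hm₁, by omega, rfl⟩
    · exact ⟨i + j, by omega, by omega, rfl⟩
    · obtain ⟨m, hm₁, hm₂, rfl⟩ := ih hw; exact ⟨m, hm₁, by omega, rfl⟩

lemma flatten_flowerBlock_succ_ne_nil {j : ℕ} (hf : f (i + j) ≠ []) :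
    (M.flowerBlock f i (j + 1)).flatten ≠ [] := by
  obtain ⟨e, he⟩ := Nat.exists_eq_add_of_lt (M.idemExp_pos (M.flowerPetal f i j))
  rw [flatten_flowerBlock_succ, he, List.replicate_succ]
  simp [flowerPetal, hf]

lemma evalFrom_flowerBlock_idem (j : ℕ) (q : M.Q) :
    M.evalFrom (M.evalFrom q (M.flowerBlock f i j).flatten) (M.flowerBlock f i j).flatten =
      M.evalFrom q (M.flowerBlock f i j).flatten := by
  cases j with
  | zero => rfl
  | succ j => rw [flatten_flowerBlock_succ]; exact M.evalFrom_replicate_idemExp_idem _ q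

lemma flatten_flowerBlock_prefix_succ (j : ℕ) :
    (M.flowerBlock f i j).flatten <+: (M.flowerBlock f i (j + 1)).flatten := by
  obtain ⟨e, he⟩ := Nat.exists_eq_add_of_lt (M.idemExp_pos (M.flowerPetal f i j))
  rw [flatten_flowerBlock_succ, he, zero_add, List.replicate_succ, List.flatten_cons, flowerPetal]
  simp only [List.append_assoc]
  exact List.prefix_append _ _

lemma flatten_flowerBlock_suffix_succ (j : ℕ) :
    (M.flowerBlock f i j).flatten <:+ (M.flowerBlock f i (j + 1)).flatten := by
  obtain ⟨e, he⟩ := Nat.exists_eq_add_of_lt (M.idemExp_pos (M.flowerPetal f i j))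
  rw [flatten_flowerBlock_succ, he, zero_add, List.replicate_succ', List.flatten_append,
    List.flatten_singleton, flowerPetal, ← List.append_assoc]
  exact List.suffix_append _ _

/-- Since each block ends with the previous one and acts idempotently, reading a longer block
absorbs any shorter one. -/
lemma evalFrom_flowerBlock_absorb {j n : ℕ} (hjn : j ≤ n) (q : M.Q) :
    M.evalFrom (M.evalFrom q (M.flowerBlock f i n).flatten) (M.flowerBlock f i j).flatten =
      M.evalFrom q (M.flowerBlock f i n).flatten := by
  induction n generalizing q with
  | zero => rw [Nat.le_zero.1 hjn]; exact M.evalFrom_flowerBlock_idem f i 0 q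
  | succ n ih =>
    rcases Nat.lt_or_eq_of_le hjn with hlt | rfl
    · obtain ⟨u, hu⟩ := M.flatten_flowerBlock_suffix_succ f i n
      rw [← hu, evalFrom_append]
      exact ih (by omega) _
    · exact M.evalFrom_flowerBlock_idem f i _ q

end Blocks

section Petals

variable (M) (f : ℕ → List σ) {i : ℕ}

lemma append_cycle_flowerPetal_mem_flowerLang {k n j : ℕ} (hn : i + n ≤ k + 1)
    (hj : i + j ≤ k) (x : List σ) (hv : M.flowerPetal f i j ≠ []) :
    ((x ++ (M.flowerBlock f i n).flatten) ++ₛ Stream'.cycle _ hv).get ∈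
      flowerLang i k x f (i + j) := by
  refine ⟨M.flowerBlock f i n ++ M.flowerBlock f i j ++ [f (i + j)], ?_,
    fun _ => M.flowerBlock f i j ++ M.flowerBlock f i j, ?_, fun m => ?_⟩
  · intro w hw
    simp only [List.mem_append, List.mem_singleton] at hw
    rcases hw with (hw | hw) | rfl
    · obtain ⟨m, hm₁, hm₂, rfl⟩ := M.mem_flowerBlock f i hw; exact ⟨m, hm₁, by omega, rfl⟩
    · obtain ⟨m, hm₁, hm₂, rfl⟩ := M.mem_flowerBlock f i hw; exact ⟨m, hm₁, by omega, rfl⟩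
    · exact ⟨i + j, by omega, hj, rfl⟩
  · intro _ w hw
    obtain ⟨m, hm₁, hm₂, rfl⟩ := M.mem_flowerBlock f i ((List.mem_append.1 hw).elim id id)
    exact ⟨m, hm₁, hm₂, rfl⟩
  · refine (hasPrefixWord_append_cycle _ _ hv (m + 1)).of_prefix ?_
    have hrot := List.append_flatten_replicate_append
      ((M.flowerBlock f i j).flatten ++ f (i + j)) (M.flowerBlock f i j).flatten m
    simp only [List.map_const', List.length_range, List.flatten_append, List.flatten_cons,
      List.flatten_nil, List.append_nil, List.append_assoc] at hrot ⊢
    rw [hrot, List.replicate_succ', List.flatten_append, List.flatten_singleton]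
    simp [flowerPetal]

variable {M} in
lemma infOcc_append_cycle_flowerPetal {n j : ℕ} (hjn : j < n) (x : List σ)
    (hv : M.flowerPetal f i j ≠ []) :
    M.infOcc ((x ++ (M.flowerBlock f i n).flatten) ++ₛ Stream'.cycle _ hv).get =
      M.visitedStates (M.evalFrom M.init (x ++ (M.flowerBlock f i n).flatten))
        (M.flowerBlock f i (j + 1)).flatten := by
  refine infOcc_eq_of_loops (B := fun _ => (M.flowerBlock f i (j + 1)).flatten) (fun m => ?_) rfl
    (fun _ => ?_) (fun _ => ?_) fun _ => rfl
  · rw [List.map_const', List.length_range, flatten_flowerBlock_succ,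
      List.flatten_replicate_flatten_replicate]
    exact hasPrefixWord_append_cycle _ _ hv _
  · obtain ⟨e, he⟩ := Nat.exists_eq_add_of_lt (M.idemExp_pos (M.flowerPetal f i j))
    rw [flatten_flowerBlock_succ, he, zero_add, List.replicate_succ, List.flatten_cons]
    exact List.append_ne_nil_of_left_ne_nil hv _
  · rw [evalFrom_append, evalFrom_flowerBlock_absorb _ _ _ hjn]

end Petals

theorem not_dpwRecognizable_of_isFlower {i k : ℕ} {L : Set (ℕ → σ)} {x : List σ}
    {f : ℕ → List σ} (hik : i ≤ k) (hf : IsFlower i k L x f) : ¬DPWRecognizable i k L := by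
  rintro ⟨M, c, hc, hL⟩
  obtain ⟨hne, heven, hodd⟩ := hf
  set P := (M.flowerBlock f i (k - i + 1)).flatten
  set q := M.evalFrom M.init (x ++ P)
  have hv : ∀ j, i + j ≤ k → M.flowerPetal f i j ≠ [] := fun j hj => by
    simp [flowerPetal, hne (i + j) (by omega) hj]
  set S : ℕ → Finset M.Q := fun j => M.visitedStates q (M.flowerBlock f i (j + 1)).flatten
  have hpar : ∀ j ≤ k - i, (S j).sup c % 2 = (i + j + 1) % 2 := by
    intro j hj
    have hz := M.append_cycle_flowerPetal_mem_flowerLang f (k := k) (n := k - i + 1) (by omega)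
      (by omega) x (hv j (by omega))
    have hacc := hL (((x ++ P) ++ₛ Stream'.cycle _ (hv j (by omega))).get)
    rw [parityAccept_iff_odd_sup_infOcc, infOcc_append_cycle_flowerPetal f (by omega)] at hacc
    change _ ↔ Odd ((S j).sup c) at hacc
    rcases Nat.even_or_odd (i + j) with he | ho
    · have := hacc.1 (heven _ (by omega) (by omega) he hz)
      rw [Nat.odd_iff] at this; rw [Nat.even_iff] at he; omega
    · have : ¬Odd ((S j).sup c) := fun h =>
        Set.eq_empty_iff_forall_notMem.1 (hodd _ (by omega) (by omega) ho) _ ⟨hz, hacc.2 h⟩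
      rw [Nat.not_odd_iff] at this; rw [Nat.odd_iff] at ho; omega
  have hmono : ∀ j, (S j).sup c ≤ (S (j + 1)).sup c := fun j => by
    obtain ⟨u, hu⟩ := M.flatten_flowerBlock_prefix_succ f i (j + 1)
    exact Finset.sup_mono (by simp only [S]; rw [← hu]; exact visitedStates_subset_append _ _ _)
  have h0 : i ≤ (S 0).sup c := (hc q).1.trans <| Finset.le_sup <| self_mem_visitedStates <|
    M.flatten_flowerBlock_succ_ne_nil f i (hne (i + 0) (by omega) (by omega))
  have := add_succ_le_of_mod_two_alternating h0 (fun j _ => hmono j) hpar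
  have := Finset.sup_le (s := S (k - i)) fun q _ => (hc q).2
  omega

end DetAuto

theorem stmt_15_general {Sig : Type} (i k : ℕ) (hik : i ≤ k)
    (L : Set (ℕ → Sig)) (hL : OmegaRegular L) :
    ¬ DPWRecognizable i k L ↔
      ∃ (x : List Sig) (f : ℕ → List Sig),
        (∀ ℓ, i ≤ ℓ → ℓ ≤ k → f ℓ ≠ []) ∧
        (∀ ℓ, i ≤ ℓ → ℓ ≤ k → Even ℓ →
          LangFlower x {u | ∃ m, i ≤ m ∧ m ≤ k ∧ u = f m}
            {u | ∃ m, i ≤ m ∧ m < ℓ ∧ u = f m} (f ℓ) ⊆ L) ∧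
        (∀ ℓ, i ≤ ℓ → ℓ ≤ k → Odd ℓ →
          LangFlower x {u | ∃ m, i ≤ m ∧ m ≤ k ∧ u = f m}
            {u | ∃ m, i ≤ m ∧ m < ℓ ∧ u = f m} (f ℓ) ∩ L = ∅) := by
  obtain ⟨M, c, hc⟩ := hL
  refine ⟨fun hnot => ?_, fun ⟨x, f, hf⟩ => DetAuto.not_dpwRecognizable_of_isFlower hik hf⟩
  by_cases hchain : ∃ I, DetAuto.AltChain c i I (k + 1)
  · obtain ⟨I, hI⟩ := hchain
    exact DetAuto.exists_isFlower_of_altChain hc hik hI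
  · exact absurd (DetAuto.dpwRecognizable_of_not_exists_altChain hc hik hchain) hnot

/-- An ω-regular `L` is not DPW[i,k]-recognizable iff there are `x ∈ Σ*` and
`x_i, …, x_k ∈ Σ⁺` such that for even `ℓ` the language
`x·{x_i,…,x_k}*·({x_i,…,x_{ℓ-1}}*·x_ℓ)^ω` is contained in `L`, and for odd `ℓ` it is
disjoint from `L`. -/
theorem stmt_15 {Sig : Type} [Fintype Sig] (i k : ℕ) (hi : i = 0 ∨ i = 1) (hik : i ≤ k)
    (L : Set (ℕ → Sig)) (hL : OmegaRegular L) :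
    ¬ DPWRecognizable i k L ↔
      ∃ (x : List Sig) (f : ℕ → List Sig),
        (∀ ℓ, i ≤ ℓ → ℓ ≤ k → f ℓ ≠ []) ∧
        (∀ ℓ, i ≤ ℓ → ℓ ≤ k → Even ℓ →
          LangFlower x {u | ∃ m, i ≤ m ∧ m ≤ k ∧ u = f m}
            {u | ∃ m, i ≤ m ∧ m < ℓ ∧ u = f m} (f ℓ) ⊆ L) ∧
        (∀ ℓ, i ≤ ℓ → ℓ ≤ k → Odd ℓ →
          LangFlower x {u | ∃ m, i ≤ m ∧ m ≤ k ∧ u = f m}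
            {u | ∃ m, i ≤ m ∧ m < ℓ ∧ u = f m} (f ℓ) ∩ L = ∅) :=
  stmt_15_general i k hik L hL
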